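/- arXiv:2601.16438 — 6 statements merged into one kernel-verified Lean document; each statement's English description precedes it below -/
import Mathlib

section
/- Let α₁,…,αₙ be pairwise distinct elements of a field F with n ≥ 3, and set uᵢ = ∏_{j≠i}(αᵢ - αⱼ)⁻¹. Then for every integer h ≥ n-1, ∑_{i=1}^n uᵢ αᵢ^h equals the complete homogeneous symmetric polynomial S_{h-n+1}(α₁,…,αₙ) of degree h-n+1. -/
/-!
Reflecting the Lagrange identity `∑ᵢ basisᵢ = 1` in degree `n - 1` gives the partial fraction
identity `∑ᵢ uᵢ ∏_{j ≠ i} (1 - αⱼ t) = t ^ (n - 1)`. Dividing by `∏ⱼ (1 - αⱼ t)` in `F⟦t⟧`, where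
`1 / (1 - α t) = ∑ₖ αᵏ tᵏ` and hence `∏ⱼ 1 / (1 - αⱼ t) = ∑ₖ Sₖ(α) tᵏ`, turns it into
`∑ᵢ uᵢ / (1 - αᵢ t) = t ^ (n - 1) ∑ₖ Sₖ(α) tᵏ`; compare the coefficients of `t ^ h`.
-/

/-- The complete homogeneous symmetric polynomial of degree `t` evaluated at `x`. -/
def hsym {F : Type*} [CommRing F] (n : ℕ) (x : Fin n → F) (t : ℕ) : F :=
  ∑ f ∈ Finset.Nat.antidiagonalTuple n t, ∏ i, x i ^ f i

open Polynomial Finset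

lemma hsym_eq_coeff_prod {R : Type*} [CommRing R] (n : ℕ) (x : Fin n → R) (t : ℕ) :
    hsym n x t = PowerSeries.coeff t (∏ j, PowerSeries.mk (x j ^ ·)) := by
  rw [PowerSeries.coeff_prod, finsuppAntidiag, sum_map, hsym,
    ← piAntidiag_univ_fin_eq_antidiagonalTuple, ← sum_attach]
  simp only [PowerSeries.coeff_mk]
  rfl

lemma PowerSeries.one_sub_C_mul_X_mul_mk_pow {R : Type*} [CommRing R] (a : R) :
    (1 - C a * X) * mk (a ^ ·) = 1 := by
  simpa [mul_comm, rescale_mk] using congrArg (rescale a) (mk_one_mul_one_sub_eq_one (S := R))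

lemma Polynomial.reflect_prod_X_sub_C {R ι : Type*} [CommRing R] (s : Finset ι) (a : ι → R) :
    reflect #s (∏ j ∈ s, (X - C (a j))) = ∏ j ∈ s, (1 - C (a j) * X) := by
  classical
  induction s using Finset.induction_on with
  | empty => simp [reflect_one]
  | insert i s hi ih =>
    have hdeg : (∏ j ∈ s, (X - C (a j))).natDegree ≤ #s := by
      simpa using (natDegree_prod_le s fun j => X - C (a j)).trans
        (sum_le_card_nsmul s _ 1 fun _ _ => natDegree_sub_C.trans_le natDegree_X_le)
    rw [prod_insert hi, prod_insert hi, card_insert_of_notMem hi, add_comm,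
      reflect_mul _ _ (natDegree_sub_C.trans_le natDegree_X_le) hdeg, ih]
    simp [reflect_sub, reflect_C]

section Lagrange

variable {F ι : Type*} [Field F] [DecidableEq ι] {s : Finset ι} {v : ι → F}

lemma Lagrange.basis_eq_C_mul_prod_X_sub_C (i : ι) :
    Lagrange.basis s v i =
      C (∏ j ∈ s.erase i, (v i - v j)⁻¹) * ∏ j ∈ s.erase i, (X - C (v j)) := by
  simp only [Lagrange.basis, Lagrange.basisDivisor, prod_mul_distrib, map_prod]

lemma Lagrange.sum_C_mul_prod_one_sub_C_mul_X_eq_X_pow (hvs : Set.InjOn v s) (hs : s.Nonempty) :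
    ∑ i ∈ s, C (∏ j ∈ s.erase i, (v i - v j)⁻¹) * ∏ j ∈ s.erase i, (1 - C (v j) * X) =
      X ^ (#s - 1) := by
  have hreflect := congrArg (reflect (#s - 1)) (Lagrange.sum_basis hvs hs)
  rw [reflect_one] at hreflect
  rw [← hreflect, ← AddMonoidHom.mk'_apply (reflect (#s - 1)) fun f g => reflect_add f g _,
    map_sum]
  refine sum_congr rfl fun i hi => ?_
  rw [AddMonoidHom.mk'_apply, basis_eq_C_mul_prod_X_sub_C, reflect_C_mul, ← card_erase_of_mem hi,
    reflect_prod_X_sub_C]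

lemma PowerSeries.sum_C_mul_mk_pow_eq_X_pow_mul_prod (hvs : Set.InjOn v s) (hs : s.Nonempty) :
    ∑ i ∈ s, C (∏ j ∈ s.erase i, (v i - v j)⁻¹) * mk (v i ^ ·) =
      X ^ (#s - 1) * ∏ j ∈ s, mk (v j ^ ·) := by
  have key := congrArg (coeToPowerSeries.ringHom (R := F))
    (Lagrange.sum_C_mul_prod_one_sub_C_mul_X_eq_X_pow hvs hs)
  simp only [map_sum, map_mul, map_prod, map_sub, map_one, map_pow, coeToPowerSeries.ringHom_apply,
    Polynomial.coe_C, Polynomial.coe_X] at key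
  rw [← key, sum_mul]
  refine sum_congr rfl fun i hi => ?_
  rw [← mul_prod_erase s _ hi, mul_left_comm, mul_assoc, ← prod_mul_distrib,
    prod_eq_one fun j _ => one_sub_C_mul_X_mul_mk_pow (v j), mul_one, map_prod, mul_comm]

lemma Lagrange.sum_prod_inv_sub_mul_pow_eq_coeff_prod (hvs : Set.InjOn v s) (hs : s.Nonempty)
    {h : ℕ} (hh : #s - 1 ≤ h) :
    ∑ i ∈ s, (∏ j ∈ s.erase i, (v i - v j)⁻¹) * v i ^ h =
      PowerSeries.coeff (h - (#s - 1)) (∏ j ∈ s, PowerSeries.mk (v j ^ ·)) := by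
  simpa [map_sum, PowerSeries.coeff_X_pow_mul', hh] using
    congrArg (PowerSeries.coeff h) (PowerSeries.sum_C_mul_mk_pow_eq_X_pow_mul_prod hvs hs)

end Lagrange

theorem stmt_1 {F : Type*} [Field F] (n : ℕ) (hn : 3 ≤ n) (α : Fin n → F)
    (hα : Function.Injective α) (u : Fin n → F)
    (hu : ∀ i, u i = ∏ j ∈ Finset.univ.erase i, (α i - α j)⁻¹)
    (h : ℕ) (hh : n - 1 ≤ h) :
    ∑ i, u i * α i ^ h = hsym n α (h + 1 - n) := by
  have hsum := Lagrange.sum_prod_inv_sub_mul_pow_eq_coeff_prod hα.injOn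
    (univ_nonempty_iff.2 ⟨⟨0, by omega⟩⟩) (h := h) (by simpa using hh)
  simp only [card_univ, Fintype.card_fin, ← hu] at hsum
  rw [hsum, hsym_eq_coeff_prod, show h + 1 - n = h - (n - 1) by omega]
end

section
/- Let α₁,…,αₙ ∈ F_q be pairwise distinct, let G be the n×n Vandermonde-type matrix whose row j consists of α₁^{j-1},…,αₙ^{j-1} (1 ≤ j ≤ n), and let 0 ≤ r ≤ n-1. Then the unique solution (w₁,…,wₙ)ᵀ of G·(w₁,…,wₙ)ᵀ = e_{r+1} (the (r+1)-st standard basis vector) is given by wᵢ = (-1)^{n+r+1} uᵢ σ_{n-1-r}(i), where uᵢ = ∏_{j≠i}(αᵢ-αⱼ)⁻¹ and σ_{n-1-r}(i) is the elementary symmetric polynomial of degree n-1-r in the variables {α₁,…,αₙ}\{αᵢ}. -/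
open Matrix in
theorem stmt_3 {F : Type*} [Field F] (n : ℕ) (α : Fin n → F) (hα : Function.Injective α)
    (G : Matrix (Fin n) (Fin n) F) (hG : ∀ i j, G i j = α j ^ (i : ℕ))
    (r : Fin n) (u : Fin n → F)
    (hu : ∀ i, u i = ∏ j ∈ Finset.univ.erase i, (α i - α j)⁻¹)
    (w : Fin n → F) :
    G *ᵥ w = Pi.single r 1 ↔
      w = fun i => (-1 : F) ^ (n + (r : ℕ) + 1) * u i *
        ∑ s ∈ (Finset.univ.erase i).powersetCard (n - 1 - (r : ℕ)), ∏ j ∈ s, α j := by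
  classical
  open Polynomial Finset in
  have hr : (r : ℕ) < n := r.2
  set w₀ : Fin n → F := fun i => (-1 : F) ^ (n + (r : ℕ) + 1) * u i *
        ∑ s ∈ (Finset.univ.erase i).powersetCard (n - 1 - (r : ℕ)), ∏ j ∈ s, α j with hw₀
  -- coefficient of Lagrange basis polynomial
  have hβ : Set.InjOn α (Finset.univ : Finset (Fin n)) := hα.injOn
  have hcard : #(Finset.univ : Finset (Fin n)) = n := by simp
  have hbasis : ∀ i : Fin n, (Lagrange.basis Finset.univ α i).coeff r = w₀ i := by
    intro i
    have hce : #(Finset.univ.erase i) = n - 1 := by simp [Finset.card_erase_of_mem]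
    have h1 : Lagrange.basis Finset.univ α i =
        C (u i) * ∏ j ∈ Finset.univ.erase i, (X - C (α j)) := by
      rw [Lagrange.basis, hu]
      simp_rw [Lagrange.basisDivisor]
      rw [Finset.prod_mul_distrib, ← map_prod]
    have h2 : (∏ j ∈ Finset.univ.erase i, (X - C (α j))).coeff r =
        (-1 : F) ^ (n - 1 - (r : ℕ)) *
          ∑ s ∈ (Finset.univ.erase i).powersetCard (n - 1 - (r : ℕ)), ∏ j ∈ s, α j := by
      have hm : ((Finset.univ.erase i).val.map α).card = n - 1 := by
        rw [Multiset.card_map]; exact_mod_cast hce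
      have hle : (r : ℕ) ≤ ((Finset.univ.erase i).val.map α).card := by omega
      have := Multiset.prod_X_sub_C_coeff ((Finset.univ.erase i).val.map α) hle
      rw [Multiset.map_map] at this
      rw [Finset.prod, show (fun j => X - C (α j)) = (fun t => X - C t) ∘ α from rfl, this,
        hm, Finset.esymm_map_val]
    have hsign : ((-1 : F)) ^ (n + (r : ℕ) + 1) = (-1 : F) ^ (n - 1 - (r : ℕ)) := by
      have h : n + (r : ℕ) + 1 = (n - 1 - (r : ℕ)) + 2 * ((r : ℕ) + 1) := by omega
      rw [h, pow_add, pow_mul, neg_one_sq, one_pow, mul_one]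
    rw [h1, coeff_C_mul, h2, hw₀, hsign]; ring
  -- the claimed solution works
  have key : G *ᵥ w₀ = Pi.single r 1 := by
    funext k
    have hdeg : ((X : F[X]) ^ (k : ℕ)).degree < #(Finset.univ : Finset (Fin n)) := by
      rw [degree_X_pow, hcard]; exact_mod_cast k.2
    have hint := Lagrange.eq_interpolate hβ hdeg
    have := congrArg (fun p => Polynomial.coeff p r) hint
    simp only [coeff_X_pow, Lagrange.interpolate_apply, finset_sum_coeff, coeff_C_mul,
      eval_pow, eval_X] at this
    simp_rw [hbasis] at this
    simp only [Matrix.mulVec, dotProduct, hG]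
    rw [← this]
    rcases eq_or_ne k r with h | h
    · subst h; simp
    · simp [Pi.single_apply, Fin.val_eq_val, h, h.symm]
  -- G is invertible
  have hdet : IsUnit G.det := by
    have hGT : Gᵀ = Matrix.vandermonde α := by
      ext i j; simp [Matrix.vandermonde_apply, hG]
    have : G.det ≠ 0 := by
      rw [← Matrix.det_transpose, hGT, Matrix.det_vandermonde]
      refine Finset.prod_ne_zero_iff.2 fun i _ => Finset.prod_ne_zero_iff.2 fun j hj => ?_
      have : i ≠ j := fun h => by simp [h] at hj
      exact sub_ne_zero.2 fun h => this (hα h.symm)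
    exact isUnit_iff_ne_zero.2 this
  have hinj : Function.Injective (G.mulVec) := Matrix.mulVec_injective_iff_isUnit.2 ((Matrix.isUnit_iff_isUnit_det G).2 hdet)
  constructor
  · intro h; exact hinj (h.trans key.symm)
  · intro h; rw [h]; exact key
end

section
/- Let α₁,…,αₙ be the n distinct roots of x^n - λ in a field F (λ ≠ 0, char F ∤ n). Then the complete homogeneous symmetric polynomials satisfy S₀(α₁,…,αₙ) = 1, S_t(α₁,…,αₙ) = 0 for all 1 ≤ t < n, and S_{nj}(α₁,…,αₙ) = λ^j for all j ≥ 0. -/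
namespace Polynomial

theorem prod_X_sub_C_eq_of_monic {R ι : Type*} [CommRing R] [IsDomain R] [Fintype ι]
    {p : R[X]} (hp : p.Monic) {α : ι → R} (hα : Function.Injective α)
    (hroot : ∀ i, p.IsRoot (α i)) (hcard : p.natDegree = Fintype.card ι) :
    ∏ i, (X - C (α i)) = p := by
  classical
  have hle : Finset.univ.val.map α ≤ p.roots :=
    (Multiset.le_iff_subset (Finset.univ.nodup.map hα)).2 fun a ha => by
      obtain ⟨i, -, rfl⟩ := Multiset.mem_map.1 ha
      exact (mem_roots hp.ne_zero).2 (hroot i)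
  have hroots : Finset.univ.val.map α = p.roots :=
    Multiset.eq_of_le_of_card_le hle (by simpa [hcard] using p.card_roots')
  rw [← prod_multiset_X_sub_C_of_monic_of_roots_card_eq hp (by simp [← hroots, hcard]), ← hroots,
    Multiset.map_map]
  rfl

theorem reflect_prod_X_sub_C_s5 {R ι : Type*} [CommRing R] (s : Finset ι) (a : ι → R) :
    reflect s.card (∏ i ∈ s, (X - C (a i))) = ∏ i ∈ s, (1 - C (a i) * X) := by
  classical
  induction s using Finset.induction with
  | empty => simp
  | @insert x s hx ih =>
    have hdeg : (∏ i ∈ s, (X - C (a i))).natDegree ≤ s.card :=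
      (natDegree_prod_le _ _).trans <|
        (Finset.sum_le_card_nsmul _ _ 1 fun i _ => natDegree_X_sub_C_le _).trans (by simp)
    rw [Finset.prod_insert hx, Finset.card_insert_of_notMem hx, add_comm,
      reflect_mul _ _ (natDegree_X_sub_C_le (a x)) hdeg, ih, Finset.prod_insert hx]
    congr 1
    rw [reflect_sub, reflect_C, pow_one, ← pow_one (X : R[X]), reflect_monomial]
    simp

theorem prod_one_sub_C_mul_X_eq_of_pow_eq {R : Type*} [CommRing R] [IsDomain R]
    {n : ℕ} (hn : 0 < n) {lam : R} {α : Fin n → R} (hα : Function.Injective α)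
    (hroot : ∀ i, α i ^ n = lam) :
    ∏ i, (1 - C (α i) * X) = 1 - C lam * X ^ n := by
  have hfactor : ∏ i, (X - C (α i)) = X ^ n - C lam :=
    prod_X_sub_C_eq_of_monic (monic_X_pow_sub_C lam hn.ne') hα (by simp [hroot]) (by simp)
  have hreflect := reflect_prod_X_sub_C_s5 Finset.univ α
  rw [Finset.card_univ, Fintype.card_fin, hfactor, reflect_sub, reflect_C, reflect_monomial,
    revAt_le le_rfl, Nat.sub_self, pow_zero] at hreflect
  exact hreflect.symm

end Polynomial

namespace PowerSeries

theorem one_sub_C_mul_X_mul_mk_pow_s5 {R : Type*} [CommRing R] (a : R) :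
    (1 - C a * X) * mk (a ^ ·) = 1 := by
  simpa [rescale_mk, mul_comm] using congrArg (rescale a) (mk_one_mul_one_sub_eq_one R)

theorem coeff_mul_add_of_one_sub_C_mul_X_pow_mul_eq_one {R : Type*} [CommRing R]
    {a : R} {n : ℕ} {P : R⟦X⟧} (hP : (1 - C a * X ^ n) * P = 1) {r : ℕ} (hr : r < n) (q : ℕ) :
    coeff (n * q + r) P = if r = 0 then a ^ q else 0 := by
  have hrec : ∀ t, coeff t P = coeff t (1 : R⟦X⟧) + a * coeff t (X ^ n * P) := fun t => by
    have := congrArg (coeff t) hP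
    rw [sub_mul, one_mul, mul_assoc, map_sub, coeff_C_mul] at this
    linear_combination this
  induction q with
  | zero =>
    rw [mul_zero, zero_add, hrec, coeff_X_pow_mul', if_neg (by omega), coeff_one]
    simp
  | succ q ih =>
    rw [show n * (q + 1) + r = n * q + r + n by ring, hrec, coeff_X_pow_mul, ih, coeff_one,
      if_neg (by omega)]
    split_ifs <;> simp [pow_succ, mul_comm]

end PowerSeries

open PowerSeries in
theorem hsym_eq_coeff_prod_mk_pow {R : Type*} [CommRing R] (n : ℕ) (x : Fin n → R) (t : ℕ) :
    hsym n x t = coeff t (∏ i, mk (x i ^ ·)) := by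
  classical
  rw [coeff_prod, hsym, ← Finset.piAntidiag_univ_fin_eq_antidiagonalTuple,
    Finset.finsuppAntidiag, Finset.sum_map]
  simp only [coeff_mk]
  exact (Finset.sum_attach _ _).symm

open PowerSeries in
theorem hsym_mul_add_of_pow_eq {R : Type*} [CommRing R] [IsDomain R] {n : ℕ} {lam : R}
    {α : Fin n → R} (hα : Function.Injective α) (hroot : ∀ i, α i ^ n = lam)
    {r : ℕ} (hr : r < n) (q : ℕ) :
    hsym n α (n * q + r) = if r = 0 then lam ^ q else 0 := by
  have hprod := congrArg Polynomial.coeToPowerSeries.ringHom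
    (Polynomial.prod_one_sub_C_mul_X_eq_of_pow_eq (by omega) hα hroot)
  simp only [map_prod, map_sub, map_mul, map_pow, map_one, Polynomial.coeToPowerSeries.ringHom_apply,
    Polynomial.coe_C, Polynomial.coe_X] at hprod
  have hgen : (1 - C lam * X ^ n) * ∏ i, mk (α i ^ ·) = 1 := by
    rw [← hprod, ← Finset.prod_mul_distrib]
    simp only [one_sub_C_mul_X_mul_mk_pow_s5, Finset.prod_const_one]
  rw [hsym_eq_coeff_prod_mk_pow]
  exact coeff_mul_add_of_one_sub_C_mul_X_pow_mul_eq_one hgen hr q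

theorem stmt_5_general {F : Type*} [Field F] (n : ℕ) (lam : F)
    (hn : (n : F) ≠ 0) (α : Fin n → F) (hα : Function.Injective α)
    (hroot : ∀ i, α i ^ n = lam) :
    hsym n α 0 = 1 ∧ (∀ t, 1 ≤ t → t < n → hsym n α t = 0) ∧
      (∀ j : ℕ, hsym n α (n * j) = lam ^ j) := by
  have hn0 : 0 < n := Nat.pos_of_ne_zero (by rintro rfl; exact hn Nat.cast_zero)
  refine ⟨?_, fun t ht htn => ?_, fun j => ?_⟩
  · simpa using hsym_mul_add_of_pow_eq hα hroot hn0 0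
  · simpa [Nat.one_le_iff_ne_zero.1 ht] using hsym_mul_add_of_pow_eq hα hroot htn 0
  · simpa using hsym_mul_add_of_pow_eq hα hroot hn0 j

theorem stmt_5 {F : Type*} [Field F] (n : ℕ) (lam : F) (hlam : lam ≠ 0)
    (hn : (n : F) ≠ 0) (α : Fin n → F) (hα : Function.Injective α)
    (hroot : ∀ i, α i ^ n = lam) :
    hsym n α 0 = 1 ∧ (∀ t, 1 ≤ t → t < n → hsym n α t = 0) ∧
      (∀ j : ℕ, hsym n α (n * j) = lam ^ j) :=
  stmt_5_general n lam hn α hα hroot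
end

section
/- Let α_{i₁},…,α_{i_k} ∈ F be pairwise distinct, g(x) = ∏_{j=1}^k(x - α_{i_j}) = ∑_{j=0}^k c_j x^{k-j} (so c₀ = 1). Let e_s = S_s(α_{i₁},…,α_{i_k}) denote the complete homogeneous symmetric polynomials. Then for 0 ≤ t and 0 ≤ r ≤ k-1, the coefficient f_{t,r} of x^r in the remainder of x^{k+t} modulo g(x) is f_{t,r} = -∑_{i=0}^{t} c_{k-r+i} e_{t-i} (with the convention c_j = 0 for j > k or j < 0). -/
/-!
The `c_j` are the coefficients of the reversed polynomial `∏ (1 - α_j X)`, whose inverse power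
series is `∑ e_s X^s`; hence `∑_{j ≤ m} c_j e_{m-j} = 0` for `m ≥ 1`. Reducing `X` times a
remainder once more modulo the monic `g` gives
`X^{k+t+1} mod g = X · (X^{k+t} mod g) - f_{t,k-1} · g`, and by the identity above
`f_{t,k-1} = e_{t+1}`, so the formula follows by induction on `t`.
-/

open Finset

namespace PowerSeries

variable {R : Type*} [CommRing R]

theorem mk_pow_mul_one_sub_C_mul_X (a : R) : mk (a ^ ·) * (1 - C a * X) = 1 := by
  simpa [rescale_mk, rescale_X] using congrArg (rescale a) (mk_one_mul_one_sub_eq_one R)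

theorem mk_hsym (n : ℕ) (x : Fin n → R) : mk (hsym n x) = ∏ i, mk (x i ^ ·) := by
  ext t
  rw [coeff_prod, coeff_mk, hsym, ← piAntidiag_univ_fin_eq_antidiagonalTuple]
  simpa [finsuppAntidiag] using (sum_attach _ _).symm

theorem mk_hsym_mul_prod_one_sub_C_mul_X (n : ℕ) (x : Fin n → R) :
    mk (hsym n x) * ∏ i, (1 - C (x i) * X) = 1 := by
  simp [mk_hsym, ← prod_mul_distrib, mk_pow_mul_one_sub_C_mul_X]

theorem coeff_zero_eq_one_of_mul_mk_eq_one {φ : R⟦X⟧} {e : ℕ → R}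
    (hφ : constantCoeff φ = 1) (h : φ * mk e = 1) : e 0 = 1 := by
  simpa [hφ] using congrArg (coeff 0) h

theorem eq_neg_sum_of_mul_mk_eq_one {φ : R⟦X⟧} {e : ℕ → R} (hφ : constantCoeff φ = 1)
    (h : φ * mk e = 1) (t : ℕ) :
    e (t + 1) = -∑ i ∈ range (t + 1), coeff (i + 1) φ * e (t - i) := by
  have := congrArg (coeff (t + 1)) h
  rw [coeff_mul, Nat.sum_antidiagonal_eq_sum_range_succ_mk, sum_range_succ', coeff_one,
    if_neg t.succ_ne_zero] at this
  simp only [coeff_mk, coeff_zero_eq_constantCoeff_apply, hφ, one_mul, Nat.sub_zero,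
    Nat.add_sub_add_right] at this
  linear_combination this

end PowerSeries

namespace Polynomial

variable {R : Type*} [CommRing R]

theorem reverse_X_sub_C (a : R) : (X - C a).reverse = 1 - C a * X := by
  nontriviality R
  rw [sub_eq_add_neg, ← C_neg, reverse_add_C, ← one_mul X, reverse_mul_X, ← C_1, reverse_C]
  simp [sub_eq_add_neg]

theorem reverse_prod_X_sub_C [IsDomain R] {ι : Type*} (s : Finset ι) (a : ι → R) :
    (∏ i ∈ s, (X - C (a i))).reverse = ∏ i ∈ s, (1 - C (a i) * X) := by
  induction s using Finset.cons_induction with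
  | empty => simpa using reverse_C (1 : R)
  | cons i s hi ih => rw [prod_cons, prod_cons, reverse_mul_of_domain, ih, reverse_X_sub_C]

theorem X_mul_modByMonic [Nontrivial R] {g p : R[X]} (hg : g.Monic) (hp : p.degree < g.degree) :
    (X * p) %ₘ g = X * p - C (p.coeff (g.natDegree - 1)) * g := by
  rw [modByMonic_eq_of_dvd_sub hg (p₂ := X * p - C (p.coeff (g.natDegree - 1)) * g) (by simp),
    modByMonic_eq_self_iff hg, degree_eq_natDegree hg.ne_zero, degree_lt_iff_coeff_zero]
  rw [degree_eq_natDegree hg.ne_zero] at hp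
  intro m hm
  have hpm : ∀ n, g.natDegree ≤ n → p.coeff n = 0 := fun n hn =>
    coeff_eq_zero_of_degree_lt (hp.trans_le (by exact_mod_cast hn))
  rcases m with _ | m
  · have : g.natDegree = 0 := by exact_mod_cast Nat.le_zero.mp hm
    simp [this, hpm]
  · rw [coeff_sub, coeff_X_mul, coeff_C_mul]
    rcases (show g.natDegree ≤ m + 1 by exact_mod_cast hm).eq_or_lt with h | h
    · rw [← h, hg.coeff_natDegree, show g.natDegree - 1 = m by omega, mul_one, sub_self]
    · simp [hpm m (by omega), coeff_eq_zero_of_natDegree_lt h]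

theorem X_pow_succ_modByMonic [Nontrivial R] {g : R[X]} (hg : g.Monic) (n : ℕ) :
    X ^ (n + 1) %ₘ g = X * (X ^ n %ₘ g) - C ((X ^ n %ₘ g).coeff (g.natDegree - 1)) * g := by
  rw [← X_mul_modByMonic hg (degree_modByMonic_lt _ hg)]
  refine modByMonic_eq_of_dvd_sub hg ?_
  rw [pow_succ', ← mul_sub]
  exact dvd_mul_of_dvd_right (dvd_sub_comm.mp (dvd_modByMonic_sub _ _)) _

theorem X_pow_natDegree_modByMonic [Nontrivial R] {g : R[X]} (hg : g.Monic) :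
    X ^ g.natDegree %ₘ g = X ^ g.natDegree - g := by
  rw [modByMonic_eq_of_dvd_sub hg (p₂ := X ^ g.natDegree - g) (by simp),
    modByMonic_eq_self_iff hg]
  exact degree_sub_lt_right (by rw [degree_X_pow, degree_eq_natDegree hg.ne_zero]) hg.ne_zero
    (by rw [leadingCoeff_X_pow, hg.leadingCoeff])

theorem coeff_X_pow_add_modByMonic [Nontrivial R] {g : R[X]} (hg : g.Monic) {e : ℕ → R}
    (he : (g.reverse : PowerSeries R) * PowerSeries.mk e = 1) (t : ℕ) {r : ℕ}
    (hr : r < g.natDegree) :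
    (X ^ (g.natDegree + t) %ₘ g).coeff r
      = -∑ i ∈ range (t + 1), g.reverse.coeff (g.natDegree - r + i) * e (t - i) := by
  set k := g.natDegree with hk
  set c := g.reverse.coeff with hc
  have hc_sub : ∀ r ≤ k, c (k - r) = g.coeff r := fun r hr => by
    rw [hc, coeff_reverse, revAt_le (Nat.sub_le _ _), Nat.sub_sub_self hr]
  have hc_gt : ∀ j, k < j → c j = 0 := fun j hj =>
    coeff_eq_zero_of_natDegree_lt ((reverse_natDegree_le g).trans_lt hj)
  have hconst : PowerSeries.constantCoeff (g.reverse : PowerSeries R) = 1 := by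
    simp [hg.leadingCoeff]
  have he_succ (t : ℕ) : e (t + 1) = -∑ i ∈ range (t + 1), c (i + 1) * e (t - i) := by
    simpa only [coeff_coe] using PowerSeries.eq_neg_sum_of_mul_mk_eq_one hconst he t
  induction t generalizing r with
  | zero =>
    rw [add_zero, X_pow_natDegree_modByMonic hg, coeff_sub, coeff_X_pow, if_neg hr.ne,
      sum_range_one, PowerSeries.coeff_zero_eq_one_of_mul_mk_eq_one hconst he, add_zero,
      hc_sub r hr.le]
    simp
  | succ t ih =>
    have hlast : (X ^ (k + t) %ₘ g).coeff (k - 1) = e (t + 1) := by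
      rw [ih (by omega), he_succ, show k - (k - 1) = 1 by omega]
      simp_rw [add_comm 1]
    rw [← add_assoc, X_pow_succ_modByMonic hg, ← hk, hlast, coeff_sub, coeff_C_mul,
      ← hc_sub r hr.le, sum_range_succ']
    simp only [Nat.add_sub_add_right, add_zero, Nat.sub_zero]
    suffices (X * (X ^ (k + t) %ₘ g)).coeff r
        = -∑ i ∈ range (t + 1), c (k - r + (i + 1)) * e (t - i) by
      rw [this]; ring
    rcases r with _ | r
    · rw [coeff_X_mul_zero, eq_comm, neg_eq_zero]
      exact sum_eq_zero fun i _ => by rw [hc_gt _ (by omega), zero_mul]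
    · rw [coeff_X_mul, ih (by omega)]
      congr 1
      exact sum_congr rfl fun i _ => by rw [show k - (r + 1) + (i + 1) = k - r + i by omega]

end Polynomial

open Polynomial in
theorem stmt_10_general {F : Type*} [Field F] (k : ℕ) (hk : 1 ≤ k) (α : Fin k → F)
    (t r : ℕ) (hr : r ≤ k - 1)
    (g : Polynomial F) (hg : g = ∏ j, (X - C (α j)))
    (c : ℕ → F) (hc : ∀ j, j ≤ k → c j = g.coeff (k - j))
    (hc' : ∀ j, k < j → c j = 0)
    (e : ℕ → F) (he : ∀ s, e s = hsym k α s) :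
    ((X : Polynomial F) ^ (k + t) %ₘ g).coeff r
      = -∑ i ∈ Finset.range (t + 1), c (k - r + i) * e (t - i) := by
  have hmonic : g.Monic := hg ▸ monic_prod_X_sub_C α univ
  have hdeg : g.natDegree = k := by
    rw [hg, natDegree_prod_of_monic _ _ fun j _ => monic_X_sub_C (α j)]
    simp
  have hseries : (g.reverse : PowerSeries F) * PowerSeries.mk e = 1 := by
    rw [funext he, mul_comm, hg, reverse_prod_X_sub_C, ← coeToPowerSeries.ringHom_apply, map_prod]
    simpa using PowerSeries.mk_hsym_mul_prod_one_sub_C_mul_X k α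
  have hc_reverse : ∀ j, c j = g.reverse.coeff j := fun j => by
    rw [coeff_reverse, hdeg]
    rcases le_or_gt j k with hj | hj
    · rw [hc j hj, revAt_le hj]
    · rw [hc' j hj, revAt_eq_self_of_lt hj, coeff_eq_zero_of_natDegree_lt (hdeg ▸ hj)]
  have key := coeff_X_pow_add_modByMonic hmonic hseries t (r := r) (by omega)
  simpa only [hdeg, ← hc_reverse] using key

open Polynomial in
theorem stmt_10 {F : Type*} [Field F] (k : ℕ) (hk : 1 ≤ k) (α : Fin k → F)
    (hα : Function.Injective α) (t r : ℕ) (hr : r ≤ k - 1)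
    (g : Polynomial F) (hg : g = ∏ j, (X - C (α j)))
    (c : ℕ → F) (hc : ∀ j, j ≤ k → c j = g.coeff (k - j))
    (hc' : ∀ j, k < j → c j = 0)
    (e : ℕ → F) (he : ∀ s, e s = hsym k α s) :
    ((X : Polynomial F) ^ (k + t) %ₘ g).coeff r
      = -∑ i ∈ Finset.range (t + 1), c (k - r + i) * e (t - i) :=
  stmt_10_general k hk α t r hr g hg c hc hc' e he
end

section
/- Let F be a field, α_{i₁},…,α_{i_k} ∈ F pairwise distinct, 1 ≤ h ≤ k-1, η_t ∈ F for t ∈ L = {0,1,…,l}. Consider the k×k matrix G_I whose rows are (α_{i_j}^s)_{j=1}^k for s ∈ {0,…,k-1}\{h}, together with the row (α_{i_j}^h + ∑_{t∈L} η_t α_{i_j}^{k+t})_{j=1}^k in position h. Then det(G_I) = (1 + ∑_{t∈L} η_t f_{t,h}) · ∏_{1≤m<j≤k}(α_{i_j} - α_{i_m}), where f_{t,h} is the coefficient of x^h in the remainder of x^{k+t} modulo g(x) = ∏_{j=1}^k (x - α_{i_j}). In particular, det(G_I) ≠ 0 if and only if 1 + ∑_{t∈L} η_t f_{t,h} ≠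 0. -/
/-!
The twisted row is row `h` of the transposed Vandermonde matrix plus the row of values at the
nodes of `p = ∑ η_t X^(k+t)`. Since the nodes are the roots of `g`, `p` may be replaced by
`p %ₘ g`, whose degree is below `k`, so its row of values is the combination of the Vandermonde
rows with the coefficients of `p %ₘ g`. By multilinearity of the determinant only the `h`-th of
these coefficients survives.
-/

open scoped Matrix

section

open Polynomial

variable {R : Type*} [CommRing R]

lemma eval_eq_sum_smul_vandermonde_transpose_row {k : ℕ} (α : Fin k → R) {p : R[X]}
    (hp : p.natDegree < k) :
    (fun j => p.eval (α j)) = ∑ r : Fin k, p.coeff r • (Matrix.vandermonde α)ᵀ r := by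
  ext j
  simp [eval_eq_sum_range' hp, ← Fin.sum_univ_eq_sum_range, Matrix.vandermonde, Finset.sum_apply]

lemma coeff_sum_smul_modByMonic {ι : Type*} (s : Finset ι) (c : ι → R) (p : ι → R[X])
    (q : R[X]) (n : ℕ) :
    ((∑ t ∈ s, c t • p t) %ₘ q).coeff n = ∑ t ∈ s, c t * (p t %ₘ q).coeff n := by
  simp [← modByMonicHom_apply, map_sum]

variable [Nontrivial R]

lemma natDegree_modByMonic_prod_X_sub_C_lt {k : ℕ} (hk : 0 < k) (α : Fin k → R) (p : R[X]) :
    (p %ₘ ∏ j, (X - C (α j))).natDegree < k := by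
  have hdeg : (∏ j, (X - C (α j))).natDegree = k := by simp
  have hne : (∏ j, (X - C (α j))) ≠ 1 := fun h1 => by
    rw [h1, natDegree_one] at hdeg
    omega
  simpa using natDegree_modByMonic_lt p (monic_prod_X_sub_C α _) hne

theorem det_updateRow_vandermonde_transpose_add_eval {k : ℕ} (α : Fin k → R) (i : Fin k)
    (p : R[X]) :
    ((Matrix.vandermonde α)ᵀ.updateRow i
        ((Matrix.vandermonde α)ᵀ i + fun j => p.eval (α j))).det =
      (1 + (p %ₘ ∏ j, (X - C (α j))).coeff i) * (Matrix.vandermonde α).det := by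
  have hrow : (fun j => p.eval (α j)) = fun j => (p %ₘ ∏ j, (X - C (α j))).eval (α j) := by
    ext j
    refine (eval₂_modByMonic_eq_self_of_root ?_).symm
    simp [eval_prod, Finset.prod_eq_zero (Finset.mem_univ j)]
  rw [Matrix.det_updateRow_add, Matrix.updateRow_eq_self, hrow,
    eval_eq_sum_smul_vandermonde_transpose_row α (natDegree_modByMonic_prod_X_sub_C_lt i.pos α p),
    Matrix.det_updateRow_sum, Matrix.det_transpose, smul_eq_mul]
  ring

end

open Polynomial in
theorem stmt_11_general {F : Type*} [Field F] (k l h : ℕ) (hk : 2 ≤ k)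
    (hh2 : h ≤ k - 1) (α : Fin k → F) (hα : Function.Injective α)
    (η : ℕ → F) (g : Polynomial F) (hg : g = ∏ j, (X - C (α j)))
    (GI : Matrix (Fin k) (Fin k) F)
    (hGI : ∀ s j, GI s j = if (s : ℕ) = h then
        α j ^ h + ∑ t ∈ Finset.range (l + 1), η t * α j ^ (k + t)
      else α j ^ (s : ℕ)) :
    GI.det = (1 + ∑ t ∈ Finset.range (l + 1),
        η t * (((X : Polynomial F) ^ (k + t) %ₘ g).coeff h)) *
      ∏ m : Fin k, ∏ j ∈ Finset.Ioi m, (α j - α m)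
    ∧ (GI.det ≠ 0 ↔
        1 + ∑ t ∈ Finset.range (l + 1),
          η t * (((X : Polynomial F) ^ (k + t) %ₘ g).coeff h) ≠ 0) := by
  let i : Fin k := ⟨h, by omega⟩
  let p : F[X] := ∑ t ∈ Finset.range (l + 1), η t • X ^ (k + t)
  have hGI_eq : GI = (Matrix.vandermonde α)ᵀ.updateRow i
      ((Matrix.vandermonde α)ᵀ i + fun j => p.eval (α j)) := by
    ext s j
    by_cases hs : s = i
    · subst hs
      simp [hGI, i, p, eval_finsetSum, Matrix.vandermonde]
    · have hsh : (s : ℕ) ≠ h := fun hsh => hs (Fin.ext hsh)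
      simp [hGI, hs, hsh, Matrix.vandermonde]
  have hdet : GI.det = (1 + ∑ t ∈ Finset.range (l + 1),
      η t * (((X : Polynomial F) ^ (k + t) %ₘ g).coeff h)) *
      ∏ m : Fin k, ∏ j ∈ Finset.Ioi m, (α j - α m) := by
    rw [hGI_eq, det_updateRow_vandermonde_transpose_add_eval, ← hg, coeff_sum_smul_modByMonic,
      Matrix.det_vandermonde]
  have hvdm : ∏ m : Fin k, ∏ j ∈ Finset.Ioi m, (α j - α m) ≠ 0 := by
    rw [← Matrix.det_vandermonde]
    exact Matrix.det_vandermonde_ne_zero_iff.mpr hα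
  exact ⟨hdet, by rw [hdet, mul_ne_zero_iff, and_iff_left hvdm]⟩

open Polynomial in
theorem stmt_11 {F : Type*} [Field F] (k l h : ℕ) (hk : 2 ≤ k)
    (hh1 : 1 ≤ h) (hh2 : h ≤ k - 1) (α : Fin k → F) (hα : Function.Injective α)
    (η : ℕ → F) (g : Polynomial F) (hg : g = ∏ j, (X - C (α j)))
    (GI : Matrix (Fin k) (Fin k) F)
    (hGI : ∀ s j, GI s j = if (s : ℕ) = h then
        α j ^ h + ∑ t ∈ Finset.range (l + 1), η t * α j ^ (k + t)
      else α j ^ (s : ℕ)) :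
    GI.det = (1 + ∑ t ∈ Finset.range (l + 1),
        η t * (((X : Polynomial F) ^ (k + t) %ₘ g).coeff h)) *
      ∏ m : Fin k, ∏ j ∈ Finset.Ioi m, (α j - α m)
    ∧ (GI.det ≠ 0 ↔
        1 + ∑ t ∈ Finset.range (l + 1),
          η t * (((X : Polynomial F) ^ (k + t) %ₘ g).coeff h) ≠ 0) :=
  stmt_11_general k l h hk hh2 α hα η g hg GI hGI
end

section
/- Let F be a field and α₁,…,αₙ the n distinct roots of x^n - λ (λ ≠ 0). Fix 2 ≤ k, 1 ≤ h ≤ k-1, l ≤ n-k-1, and η₀,…,η_l ∈ F. Let g(x) = ∏_{i=1}^{k-1}(x - αᵢ), f(x) = ∏_{i=k}^{n}(x - αᵢ) (so g·f = x^n - λ), q(x) = x^{h-1} + ∑_{t=0}^{l} η_t x^{k+t-1}, and write x^{n-h} = t(x)f(x) + ρ(x) with deg ρ ≤ n-k, ρ(x) = ∑_{j=0}^{n-k} ρ_j x^j. Let r_{h-1} be the coefficient of x^{h-1} in q(x) mod g(x). Then r_{h-1} = 1 - ∑_{t=0}^{l} η_t ρ_{n-k-t}. -/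
/-!
Write `X ^ i = A + g * B` and `X ^ j = P + f * T` (divisions by the monic `g` and `f`). Then
`B * T * (X ^ n - C c) = (X ^ i - A) * (X ^ j - P)`. Compare coefficients of `x ^ (n - 1)`: for
`n ≤ i + j` the left side and `A * P` contribute nothing for degree reasons, leaving
`A_{n-1-j} = -P_{n-1-i}`. With `i = k + t - 1` and `j = n - h` this computes the contribution of
each monomial of `q`, and the theorem follows by linearity of `p ↦ p %ₘ g`.
-/

open Polynomial

namespace Polynomial

variable {R : Type*} [CommRing R]

theorem coeff_modByMonic_mul_modByMonic_eq_zero [Nontrivial R] (p q : R[X]) {g f : R[X]}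
    (hg : g.Monic) (hf : f.Monic) {N : ℕ} (hN : g.natDegree + f.natDegree ≤ N + 1) :
    (p %ₘ g * (q %ₘ f)).coeff N = 0 := by
  by_cases hp : p %ₘ g = 0
  · simp [hp]
  by_cases hq : q %ₘ f = 0
  · simp [hq]
  have hpg := natDegree_lt_natDegree hp (degree_modByMonic_lt p hg)
  have hqf := natDegree_lt_natDegree hq (degree_modByMonic_lt q hf)
  exact coeff_eq_zero_of_natDegree_lt (natDegree_mul_le.trans_lt (by omega))

theorem coeff_divByMonic_mul_divByMonic_eq_zero [Nontrivial R] (p q : R[X]) {g f : R[X]}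
    (hg : g.Monic) (hf : f.Monic) {N : ℕ}
    (hN : p.natDegree + q.natDegree < N + g.natDegree + f.natDegree) :
    (p /ₘ g * (q /ₘ f)).coeff N = 0 := by
  by_cases hp : p /ₘ g = 0
  · simp [hp]
  by_cases hq : q /ₘ f = 0
  · simp [hq]
  have hgp := natDegree_le_natDegree (not_lt.1 (mt (divByMonic_eq_zero_iff hg).2 hp))
  have hfq := natDegree_le_natDegree (not_lt.1 (mt (divByMonic_eq_zero_iff hf).2 hq))
  refine coeff_eq_zero_of_natDegree_lt (natDegree_mul_le.trans_lt ?_)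
  rw [natDegree_divByMonic _ hg, natDegree_divByMonic _ hf]
  omega

theorem coeff_X_pow_modByMonic_eq_neg [Nontrivial R] {g f : R[X]} (hg : g.Monic) (hf : f.Monic)
    {n : ℕ} {c : R} (hgf : g * f = X ^ n - C c) {i j a b : ℕ}
    (hi : i + b + 1 = n) (hj : j + a + 1 = n) (hai : a < i) :
    (X ^ i %ₘ g).coeff a = -(X ^ j %ₘ f).coeff b := by
  have hdeg : g.natDegree + f.natDegree = n := by
    rw [← hg.natDegree_mul hf, hgf, natDegree_X_pow_sub_C]
  have hgB : g * (X ^ i /ₘ g) = X ^ i - X ^ i %ₘ g := by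
    rw [eq_sub_iff_add_eq', modByMonic_add_div]
  have hfT : f * (X ^ j /ₘ f) = X ^ j - X ^ j %ₘ f := by
    rw [eq_sub_iff_add_eq', modByMonic_add_div]
  have key : X ^ i /ₘ g * (X ^ j /ₘ f) * (X ^ n - C c)
      = X ^ (i + j) - (X ^ j %ₘ f) * X ^ i - (X ^ i %ₘ g) * X ^ j
        + X ^ i %ₘ g * (X ^ j %ₘ f) := by
    rw [← hgf, pow_add]
    linear_combination f * (X ^ j /ₘ f) * hgB + (X ^ i - X ^ i %ₘ g) * hfT
  have hN : b + i = a + j := by omega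
  have hcoeff := congrArg (coeff · (a + j)) key
  simp only [coeff_add, coeff_sub, mul_sub, coeff_mul_X_pow, coeff_X_pow] at hcoeff
  rw [← hN, coeff_mul_X_pow] at hcoeff
  rw [coeff_mul_X_pow', if_neg (by omega), mul_comm, coeff_C_mul,
    coeff_divByMonic_mul_divByMonic_eq_zero _ _ hg hf (by rw [natDegree_X_pow, natDegree_X_pow]; omega),
    coeff_modByMonic_mul_modByMonic_eq_zero _ _ hg hf (by omega), if_neg (by omega)] at hcoeff
  linear_combination hcoeff

end Polynomial

open Polynomial in
theorem stmt_13_general {F : Type*} [Field F] (n k l h : ℕ)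
    (hh1 : 1 ≤ h) (hh2 : h ≤ k - 1) (hl : l + k + 1 ≤ n)
    (lam : F) (α : Fin n → F)
    (hsplit : ∏ i, (X - C (α i)) = X ^ n - C lam) (η : ℕ → F)
    (g f q ρ : Polynomial F)
    (hg : g = ∏ i ∈ Finset.univ.filter (fun i : Fin n => (i : ℕ) < k - 1), (X - C (α i)))
    (hf : f = ∏ i ∈ Finset.univ.filter (fun i : Fin n => k - 1 ≤ (i : ℕ)), (X - C (α i)))
    (hq : q = X ^ (h - 1) + ∑ t ∈ Finset.range (l + 1), C (η t) * X ^ (k + t - 1))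
    (hρ : ρ = X ^ (n - h) %ₘ f) :
    (q %ₘ g).coeff (h - 1)
      = 1 - ∑ t ∈ Finset.range (l + 1), η t * ρ.coeff (n - k - t) := by
  have hgm : g.Monic := hg ▸ monic_prod_of_monic _ _ fun i _ => monic_X_sub_C (α i)
  have hfm : f.Monic := hf ▸ monic_prod_of_monic _ _ fun i _ => monic_X_sub_C (α i)
  have hgf : g * f = X ^ n - C lam := by
    rw [hg, hf, ← hsplit, ← Finset.prod_filter_mul_prod_filter_not Finset.univ
      (fun i : Fin n => (i : ℕ) < k - 1) (fun i => X - C (α i))]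
    simp only [not_lt]
  have hgdeg : g.natDegree = k - 1 := by
    rw [hg, natDegree_prod_of_monic _ _ fun i _ => monic_X_sub_C (α i)]
    simp only [natDegree_X_sub_C, Finset.sum_const, smul_eq_mul, mul_one, Fin.card_filter_val_lt]
    omega
  have hX : X ^ (h - 1) %ₘ g = X ^ (h - 1) := by
    rw [modByMonic_eq_self_iff hgm, degree_X_pow, degree_eq_natDegree hgm.ne_zero, hgdeg]
    exact_mod_cast (by omega : h - 1 < k - 1)
  have hmod : ∀ t ∈ Finset.range (l + 1),
      (X ^ (k + t - 1) %ₘ g).coeff (h - 1) = -ρ.coeff (n - k - t) := fun t ht => by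
    rw [Finset.mem_range] at ht
    exact hρ ▸ coeff_X_pow_modByMonic_eq_neg hgm hfm hgf (by omega) (by omega) (by omega)
  rw [hq, add_modByMonic, coeff_add, hX, coeff_X_pow_self]
  simp only [← modByMonicHom_apply, map_sum, ← smul_eq_C_mul, map_smul]
  rw [finsetSum_coeff, sub_eq_add_neg, ← Finset.sum_neg_distrib]
  congr 1
  refine Finset.sum_congr rfl fun t ht => ?_
  rw [coeff_smul, modByMonicHom_apply, hmod t ht, smul_eq_mul, mul_neg]

open Polynomial in
theorem stmt_13 {F : Type*} [Field F] (n k l h : ℕ) (hk : 2 ≤ k)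
    (hh1 : 1 ≤ h) (hh2 : h ≤ k - 1) (hl : l + k + 1 ≤ n)
    (lam : F) (hlam : lam ≠ 0) (α : Fin n → F) (hα : Function.Injective α)
    (hsplit : ∏ i, (X - C (α i)) = X ^ n - C lam) (η : ℕ → F)
    (g f q ρ : Polynomial F)
    (hg : g = ∏ i ∈ Finset.univ.filter (fun i : Fin n => (i : ℕ) < k - 1), (X - C (α i)))
    (hf : f = ∏ i ∈ Finset.univ.filter (fun i : Fin n => k - 1 ≤ (i : ℕ)), (X - C (α i)))
    (hq : q = X ^ (h - 1) + ∑ t ∈ Finset.range (l + 1), C (η t) * X ^ (k + t - 1))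
    (hρ : ρ = X ^ (n - h) %ₘ f) :
    (q %ₘ g).coeff (h - 1)
      = 1 - ∑ t ∈ Finset.range (l + 1), η t * ρ.coeff (n - k - t) :=
  stmt_13_general n k l h hh1 hh2 hl lam α hsplit η g f q ρ hg hf hq hρ
end
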